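/- arXiv:2310.16001 — 2 statements merged into one kernel-verified Lean document; each statement's English description precedes it below -/
import Mathlib

section
/- For any κ₁ > 0, there exist κ₂ > 0 and a smooth function ψ : ℝⁿ → ℝ such that for all x ∈ ℝⁿ: 0 < ψ(x) ≤ exp(-κ₂ |x|), |∇ψ(x)| ≤ κ₁ ψ(x), and |Δψ(x)| ≤ κ₁ ψ(x). -/
open Real

noncomputable def laplacian {n : ℕ} (f : EuclideanSpace ℝ (Fin n) → ℝ)
    (x : EuclideanSpace ℝ (Fin n)) : ℝ :=
  ∑ i, iteratedFDeriv ℝ 2 f x ![EuclideanSpace.single i 1, EuclideanSpace.single i 1]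

noncomputable def phiAux (κ s : ℝ) : ℝ := Real.exp (-κ * Real.sqrt (1 + s))

noncomputable def phiAux1 (κ s : ℝ) : ℝ :=
  Real.exp (-κ * Real.sqrt (1 + s)) * (-κ / (2 * Real.sqrt (1 + s)))

noncomputable def phiAux2 (κ s : ℝ) : ℝ :=
  Real.exp (-κ * Real.sqrt (1 + s)) *
    ((κ / (2 * Real.sqrt (1 + s))) ^ 2 + κ / (4 * (1 + s) * Real.sqrt (1 + s)))

lemma sqrtAux_hasDerivAt {s : ℝ} (hs : 0 ≤ s) :
    HasDerivAt (fun t => Real.sqrt (1 + t)) (1 / (2 * Real.sqrt (1 + s))) s := by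
  have h1 : (0 : ℝ) < 1 + s := by linarith
  have h := (Real.hasDerivAt_sqrt (x := 1 + s) (by positivity)).comp s
    ((hasDerivAt_id s).const_add 1)
  simpa [Function.comp_def] using h

lemma phiAux_hasDerivAt (κ : ℝ) {s : ℝ} (hs : 0 ≤ s) :
    HasDerivAt (phiAux κ) (phiAux1 κ s) s := by
  have h := ((sqrtAux_hasDerivAt hs).const_mul (-κ)).exp
  refine h.congr_deriv ?_
  unfold phiAux1
  ring

lemma gAux_hasDerivAt (κ : ℝ) {s : ℝ} (hs : 0 ≤ s) :
    HasDerivAt (fun t => -κ / (2 * Real.sqrt (1 + t)))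
      (κ / (4 * (1 + s) * Real.sqrt (1 + s))) s := by
  have h1 : (0 : ℝ) < 1 + s := by linarith
  have ht : (0 : ℝ) < Real.sqrt (1 + s) := Real.sqrt_pos.mpr h1
  have hfun : (fun t => -κ / (2 * Real.sqrt (1 + t)))
      = fun t => -κ * (2 * Real.sqrt (1 + t))⁻¹ := by
    funext t; rw [div_eq_mul_inv]
  rw [hfun]
  have h := (((sqrtAux_hasDerivAt hs).const_mul (2 : ℝ)).inv (by positivity)).const_mul (-κ)
  refine h.congr_deriv ?_
  have hts : Real.sqrt (1 + s) ^ 2 = 1 + s := Real.sq_sqrt (le_of_lt h1)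
  field_simp
  linear_combination (-4) * κ * hts

lemma phiAux1_hasDerivAt (κ : ℝ) {s : ℝ} (hs : 0 ≤ s) :
    HasDerivAt (phiAux1 κ) (phiAux2 κ s) s := by
  have h := (phiAux_hasDerivAt κ hs).mul (gAux_hasDerivAt κ hs)
  refine h.congr_deriv ?_
  unfold phiAux phiAux1 phiAux2
  ring

noncomputable def innerRSL {n : ℕ} :
    EuclideanSpace ℝ (Fin n) →L[ℝ] EuclideanSpace ℝ (Fin n) →L[ℝ] ℝ :=
  LinearMap.mkContinuous
    { toFun := fun y => innerSL ℝ y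
      map_add' := fun a b => by ext v; simp [inner_add_left]
      map_smul' := fun c a => by ext v; simp [inner_smul_left] }
    1 (fun y => by simp [innerSL_apply_norm])

@[simp] lemma innerRSL_apply {n : ℕ} (y v : EuclideanSpace ℝ (Fin n)) :
    innerRSL y v = (inner ℝ y v : ℝ) := rfl

lemma gradBoundAux (κ κ₁ : ℝ) (hκ : 0 < κ) (hκ1 : κ ≤ κ₁) {s r : ℝ} (hs : 0 ≤ s)
    (hr : 0 ≤ r) (hrs : r ^ 2 = s) :
    2 * |phiAux1 κ s| * r ≤ κ₁ * phiAux κ s := by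
  have h1 : (0 : ℝ) < 1 + s := by linarith
  have htpos : 0 < Real.sqrt (1 + s) := Real.sqrt_pos.mpr h1
  have hts : Real.sqrt (1 + s) ^ 2 = 1 + s := Real.sq_sqrt h1.le
  have hP : 0 < Real.exp (-κ * Real.sqrt (1 + s)) := Real.exp_pos _
  have hrt : r ≤ Real.sqrt (1 + s) := by nlinarith
  have habs : |phiAux1 κ s| = phiAux κ s * (κ / (2 * Real.sqrt (1 + s))) := by
    unfold phiAux phiAux1
    rw [abs_mul, abs_of_pos (Real.exp_pos _), abs_div, abs_neg, abs_of_pos hκ,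
      abs_of_pos (by positivity : (0:ℝ) < 2 * Real.sqrt (1 + s))]
  rw [habs]
  have heq : 2 * (phiAux κ s * (κ / (2 * Real.sqrt (1 + s)))) * r
      = phiAux κ s * κ * r / Real.sqrt (1 + s) := by
    field_simp
  rw [heq, div_le_iff₀ htpos]
  have hPphi : 0 < phiAux κ s := Real.exp_pos _
  nlinarith [mul_nonneg (mul_nonneg hPphi.le (sub_nonneg.mpr hκ1)) htpos.le,
    mul_nonneg (mul_nonneg hPphi.le hκ.le) (sub_nonneg.mpr hrt),
    mul_nonneg (mul_nonneg hPphi.le (sub_nonneg.mpr hκ1)) hr]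

lemma lapBoundAux (κ κ₁ : ℝ) (n : ℕ) (hn : 1 ≤ n) (hκ : 0 < κ) (hκ1 : κ ≤ 1)
    (hκ2 : κ * ((n : ℝ) + 2) ≤ κ₁) {s : ℝ} (hs : 0 ≤ s) :
    |(n : ℝ) * (2 * phiAux1 κ s) + 4 * phiAux2 κ s * s| ≤ κ₁ * phiAux κ s := by
  have h1 : (0 : ℝ) < 1 + s := by linarith
  unfold phiAux phiAux1 phiAux2
  set t := Real.sqrt (1 + s) with htdef
  have htpos : 0 < t := Real.sqrt_pos.mpr h1
  have hts : t ^ 2 = 1 + s := Real.sq_sqrt h1.le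
  have ht1 : 1 ≤ t := by nlinarith
  have hst : s = t ^ 2 - 1 := by linarith
  rw [hst]
  set P := Real.exp (-κ * t) with hPdef
  have hP : 0 < P := Real.exp_pos _
  have hnn : (1 : ℝ) ≤ (n : ℝ) := by exact_mod_cast hn
  have hE : (n : ℝ) * (2 * (P * (-κ / (2 * t))))
      + 4 * (P * ((κ / (2 * t)) ^ 2 + κ / (4 * (1 + (t ^ 2 - 1)) * t))) * (t ^ 2 - 1)
      = P * (κ ^ 2 * (t ^ 2 - 1) * t + κ * (t ^ 2 - 1) - (n : ℝ) * κ * t ^ 2) / t ^ 3 := by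
    have h2 : 1 + (t ^ 2 - 1) = t ^ 2 := by ring
    rw [h2]
    field_simp
    ring
  rw [hE, abs_div, abs_of_pos (pow_pos htpos 3), div_le_iff₀ (pow_pos htpos 3), abs_mul,
    abs_of_pos hP]
  have hXb : |κ ^ 2 * (t ^ 2 - 1) * t + κ * (t ^ 2 - 1) - (n : ℝ) * κ * t ^ 2|
      ≤ κ * ((n : ℝ) + 2) * t ^ 3 := by
    rw [abs_le]
    constructor
    · nlinarith [mul_nonneg (mul_nonneg hκ.le hκ.le) htpos.le, sq_nonneg t,
        mul_nonneg hκ.le htpos.le, mul_nonneg (mul_nonneg hκ.le htpos.le) htpos.le,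
        mul_nonneg (mul_nonneg (mul_nonneg hκ.le htpos.le) htpos.le) htpos.le,
        mul_nonneg (mul_nonneg hκ.le (sub_nonneg.mpr hnn)) (pow_pos htpos 2).le,
        mul_nonneg (mul_nonneg hκ.le (sub_nonneg.mpr hnn)) (pow_pos htpos 3).le,
        mul_nonneg (mul_nonneg hκ.le (pow_pos htpos 2).le) (sub_nonneg.mpr ht1)]
    · nlinarith [mul_nonneg (mul_nonneg hκ.le (sub_nonneg.mpr hκ1)) (pow_pos htpos 3).le,
        mul_nonneg (mul_nonneg (mul_nonneg hκ.le hκ.le) htpos.le) (sub_nonneg.mpr ht1),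
        mul_nonneg (mul_nonneg hκ.le (sub_nonneg.mpr ht1)) htpos.le,
        mul_nonneg hκ.le (sub_nonneg.mpr ht1),
        mul_nonneg (mul_nonneg (mul_nonneg hκ.le (by linarith : (0:ℝ) ≤ (n:ℝ))) (pow_pos htpos 2).le)
          (sub_nonneg.mpr ht1),
        mul_nonneg (mul_nonneg hκ.le (sub_nonneg.mpr ht1))
          (mul_nonneg htpos.le htpos.le)]
  calc P * |κ ^ 2 * (t ^ 2 - 1) * t + κ * (t ^ 2 - 1) - (n : ℝ) * κ * t ^ 2|
      ≤ P * (κ * ((n : ℝ) + 2) * t ^ 3) := by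
        exact mul_le_mul_of_nonneg_left hXb hP.le
    _ ≤ κ₁ * P * t ^ 3 := by nlinarith [mul_nonneg hP.le (pow_pos htpos 3).le]

theorem stmt0 (n : ℕ) (hn : 1 ≤ n) (κ₁ : ℝ) (hκ₁ : 0 < κ₁) :
    ∃ κ₂ > (0:ℝ), ∃ ψ : EuclideanSpace ℝ (Fin n) → ℝ,
      ContDiff ℝ (⊤ : ℕ∞) ψ ∧
      ∀ x, 0 < ψ x ∧ ψ x ≤ Real.exp (-κ₂ * ‖x‖) ∧
        ‖gradient ψ x‖ ≤ κ₁ * ψ x ∧ |laplacian ψ x| ≤ κ₁ * ψ x := by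
  have hnn : (1 : ℝ) ≤ (n : ℝ) := by exact_mod_cast hn
  set κ := min 1 (κ₁ / ((n : ℝ) + 2)) with hκdef
  have hκpos : 0 < κ := lt_min one_pos (by positivity)
  have hκ1 : κ ≤ 1 := min_le_left _ _
  have hκ2 : κ * ((n : ℝ) + 2) ≤ κ₁ := by
    have h := min_le_right 1 (κ₁ / ((n : ℝ) + 2))
    have h2 : (0 : ℝ) < (n : ℝ) + 2 := by linarith
    calc κ * ((n : ℝ) + 2) ≤ κ₁ / ((n : ℝ) + 2) * ((n : ℝ) + 2) :=
          mul_le_mul_of_nonneg_right h h2.le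
      _ = κ₁ := by field_simp
  have hκκ₁ : κ ≤ κ₁ := by nlinarith
  refine ⟨κ, hκpos, fun x : EuclideanSpace ℝ (Fin n) => phiAux κ (‖x‖ ^ 2), ?_, ?_⟩
  · rw [contDiff_iff_contDiffAt]
    intro x
    have h1 : ContDiffAt ℝ (⊤ : ℕ∞) (fun y : EuclideanSpace ℝ (Fin n) => 1 + ‖y‖ ^ 2) x :=
      contDiffAt_const.add (contDiff_norm_sq ℝ).contDiffAt
    have h2 : ContDiffAt ℝ (⊤ : ℕ∞) (fun y : EuclideanSpace ℝ (Fin n) => Real.sqrt (1 + ‖y‖ ^ 2)) x :=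
      h1.sqrt (by positivity)
    exact (contDiffAt_const.mul h2).exp
  intro x
  have hs : (0 : ℝ) ≤ ‖x‖ ^ 2 := sq_nonneg _
  have hD : ∀ y : EuclideanSpace ℝ (Fin n),
      HasFDerivAt (fun z : EuclideanSpace ℝ (Fin n) => phiAux κ (‖z‖ ^ 2))
        ((2 * phiAux1 κ (‖y‖ ^ 2)) • innerRSL y) y := by
    intro y
    have h := (phiAux_hasDerivAt κ (sq_nonneg ‖y‖)).comp_hasFDerivAt y
      (hasStrictFDerivAt_norm_sq y).hasFDerivAt
    refine h.congr_fderiv ?_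
    ext v
    simp [smul_smul]
    rw [show ∀ a b : ℝ, a * (2 * b) = 2 * a * b from fun a b => by ring]
  have hPpos : 0 < phiAux κ (‖x‖ ^ 2) := Real.exp_pos _
  refine ⟨hPpos, ?_, ?_, ?_⟩
  · -- decay
    unfold phiAux
    apply Real.exp_le_exp.mpr
    have hxt : ‖x‖ ≤ Real.sqrt (1 + ‖x‖ ^ 2) := by
      have h1 := Real.sq_sqrt (by positivity : (0:ℝ) ≤ 1 + ‖x‖ ^ 2)
      have h2 := Real.sqrt_nonneg (1 + ‖x‖ ^ 2)
      nlinarith [norm_nonneg x]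
    nlinarith
  · -- gradient bound
    have hgrad : gradient (fun z : EuclideanSpace ℝ (Fin n) => phiAux κ (‖z‖ ^ 2)) x
        = (2 * phiAux1 κ (‖x‖ ^ 2)) • x := by
      have h2 : HasGradientAt (fun z : EuclideanSpace ℝ (Fin n) => phiAux κ (‖z‖ ^ 2))
          ((2 * phiAux1 κ (‖x‖ ^ 2)) • x) x := by
        rw [hasGradientAt_iff_hasFDerivAt]
        refine (hD x).congr_fderiv ?_
        ext v
        simp [InnerProductSpace.toDual_apply_apply, inner_smul_left]
      exact h2.gradient
    rw [hgrad, norm_smul, Real.norm_eq_abs]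
    have h := gradBoundAux κ κ₁ hκpos hκκ₁ hs (norm_nonneg x) rfl
    calc |2 * phiAux1 κ (‖x‖ ^ 2)| * ‖x‖ = 2 * |phiAux1 κ (‖x‖ ^ 2)| * ‖x‖ := by
          rw [abs_mul, abs_of_pos (by norm_num : (0:ℝ) < 2)]
      _ ≤ κ₁ * phiAux κ (‖x‖ ^ 2) := h
  · -- laplacian bound
    have hfd : fderiv ℝ (fun z : EuclideanSpace ℝ (Fin n) => phiAux κ (‖z‖ ^ 2))
        = fun y => (2 * phiAux1 κ (‖y‖ ^ 2)) • innerRSL y :=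
      funext fun y => (hD y).fderiv
    have hc : HasFDerivAt (fun y : EuclideanSpace ℝ (Fin n) => 2 * phiAux1 κ (‖y‖ ^ 2))
        ((4 * phiAux2 κ (‖x‖ ^ 2)) • innerRSL x) x := by
      have h := ((phiAux1_hasDerivAt κ (sq_nonneg ‖x‖)).comp_hasFDerivAt x
        (hasStrictFDerivAt_norm_sq x).hasFDerivAt).const_mul (2 : ℝ)
      refine h.congr_fderiv ?_
      ext v
      simp [smul_smul]
      rw [show ∀ a b : ℝ, 2 * a * (2 * b) = 4 * a * b from fun a b => by ring]
    have hB : HasFDerivAt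
        (fun y : EuclideanSpace ℝ (Fin n) => (2 * phiAux1 κ (‖y‖ ^ 2)) • innerRSL y)
        ((2 * phiAux1 κ (‖x‖ ^ 2)) • (innerRSL (n := n))
          + ((4 * phiAux2 κ (‖x‖ ^ 2)) • innerRSL x).smulRight (innerRSL x)) x :=
      hc.smul (innerRSL.hasFDerivAt)
    have h2 : fderiv ℝ (fderiv ℝ (fun z : EuclideanSpace ℝ (Fin n) => phiAux κ (‖z‖ ^ 2))) x
        = (2 * phiAux1 κ (‖x‖ ^ 2)) • (innerRSL (n := n))
          + ((4 * phiAux2 κ (‖x‖ ^ 2)) • innerRSL x).smulRight (innerRSL x) := by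
      rw [hfd]
      exact hB.fderiv
    have hsum : ∑ i, x i * x i = ‖x‖ ^ 2 := by
      rw [EuclideanSpace.norm_eq, Real.sq_sqrt (by positivity)]
      exact Finset.sum_congr rfl fun i _ => by rw [Real.norm_eq_abs, sq_abs, sq]
    have hlap : laplacian (fun z : EuclideanSpace ℝ (Fin n) => phiAux κ (‖z‖ ^ 2)) x
        = (n : ℝ) * (2 * phiAux1 κ (‖x‖ ^ 2)) + 4 * phiAux2 κ (‖x‖ ^ 2) * (‖x‖ ^ 2) := by
      unfold laplacian
      simp only [iteratedFDeriv_two_apply, h2, Matrix.cons_val_zero, Matrix.cons_val_one,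
        Matrix.head_cons, ContinuousLinearMap.add_apply, ContinuousLinearMap.smul_apply,
        ContinuousLinearMap.smulRight_apply, innerSL_apply_apply, smul_eq_mul,
        EuclideanSpace.inner_single_left, EuclideanSpace.inner_single_right,
        EuclideanSpace.single_apply, if_pos, map_one, RCLike.star_def, starRingEnd_apply,
        star_trivial]
      have e1 : ∀ i : Fin n, (innerRSL (n := n) (EuclideanSpace.single i 1))
          (EuclideanSpace.single i 1) = 1 := by
        intro i
        simp [EuclideanSpace.inner_single_left, EuclideanSpace.single_apply]
      have e2 : ∀ i : Fin n, (innerRSL x) (EuclideanSpace.single i 1) = x i := by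
        intro i
        simp [EuclideanSpace.inner_single_right]
      simp only [e1, e2, mul_one]
      have e3 : ∑ i : Fin n, 4 * phiAux2 κ (‖x‖ ^ 2) * x i * x i
          = 4 * phiAux2 κ (‖x‖ ^ 2) * ‖x‖ ^ 2 := by
        rw [← hsum, Finset.mul_sum]
        exact Finset.sum_congr rfl fun i _ => by ring
      rw [Finset.sum_add_distrib, e3, Finset.sum_const, Finset.card_univ, Fintype.card_fin, nsmul_eq_mul]
    rw [hlap]
    exact lapBoundAux κ κ₁ n hn hκpos hκ1 hκ2 hs
end

section
/- For n ≥ 1, the volume of the unit ball in ℝⁿ satisfies |B(1)| < (2/√(nπ)) · (2πe/n)^{n/2}. -/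
open Real MeasureTheory

lemma stirling_lower (m : ℕ) :
    Real.sqrt π * (Real.sqrt (2 * m) * ((m : ℝ) / Real.exp 1) ^ m) ≤ (Nat.factorial m : ℝ) := by
  rcases Nat.eq_zero_or_pos m with rfl | hm
  · simp
  obtain ⟨k, rfl⟩ := Nat.exists_eq_add_of_le hm
  have h1 : Real.sqrt π ≤ Stirling.stirlingSeq (1 + k) := by
    have := Stirling.stirlingSeq'_antitone.le_of_tendsto
      (Stirling.tendsto_stirlingSeq_sqrt_pi.comp (Filter.tendsto_add_atTop_nat 1)) k
    simpa [Function.comp, Nat.succ_eq_add_one, Nat.add_comm] using this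
  have hpos : 0 < Real.sqrt (2 * ((1 + k : ℕ) : ℝ)) * (((1 + k : ℕ) : ℝ) / Real.exp 1) ^ (1 + k) := by
    positivity
  rw [Stirling.stirlingSeq, le_div_iff₀ hpos] at h1
  exact h1

-- Gamma(m + 3/2) ≥ m! * sqrt(m + 1/2)
lemma gamma_half_lower (m : ℕ) :
    (Nat.factorial m : ℝ) * Real.sqrt ((m : ℝ) + 1/2) ≤ Real.Gamma ((m : ℝ) + 1/2 + 1) := by
  set M : ℝ := (m : ℝ)
  have hM : 0 ≤ M := Nat.cast_nonneg m
  have hs : (0:ℝ) < M + 1/2 := by linarith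
  have ht : (0:ℝ) < M + 1/2 + 1 := by linarith
  have hol := Real.Gamma_mul_add_mul_le_rpow_Gamma_mul_rpow_Gamma hs ht
    (by norm_num : (0:ℝ) < 1/2) (by norm_num : (0:ℝ) < 1/2) (by norm_num)
  have harg : (1/2 : ℝ) * (M + 1/2) + 1/2 * (M + 1/2 + 1) = M + 1 := by ring
  rw [harg] at hol
  have hfac : Real.Gamma (M + 1) = (Nat.factorial m : ℝ) := by
    exact Real.Gamma_nat_eq_factorial m
  have hGs : 0 < Real.Gamma (M + 1/2) := Real.Gamma_pos_of_pos hs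
  have hGt : 0 < Real.Gamma (M + 1/2 + 1) := Real.Gamma_pos_of_pos ht
  have hrec : Real.Gamma (M + 1/2 + 1) = (M + 1/2) * Real.Gamma (M + 1/2) :=
    Real.Gamma_add_one (ne_of_gt hs)
  -- turn rpow (1/2) into sqrt
  rw [← Real.sqrt_eq_rpow, ← Real.sqrt_eq_rpow, hfac, ← Real.sqrt_mul hGs.le] at hol
  have hGs' : Real.Gamma (M + 1/2) = Real.Gamma (M + 1/2 + 1) / (M + 1/2) := by
    rw [hrec, mul_div_cancel_left₀ _ (ne_of_gt hs)]
  rw [hGs'] at hol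
  have key : Real.sqrt (Real.Gamma (M + 1/2 + 1) / (M + 1/2) * Real.Gamma (M + 1/2 + 1))
      = Real.Gamma (M + 1/2 + 1) / Real.sqrt (M + 1/2) := by
    rw [div_mul_eq_mul_div, ← sq, Real.sqrt_div (by positivity), Real.sqrt_sq hGt.le]
  rw [key] at hol
  calc (Nat.factorial m : ℝ) * Real.sqrt (M + 1/2)
      ≤ (Real.Gamma (M + 1/2 + 1) / Real.sqrt (M + 1/2)) * Real.sqrt (M + 1/2) := by
        apply mul_le_mul_of_nonneg_right hol (Real.sqrt_nonneg _)
    _ = Real.Gamma (M + 1/2 + 1) := by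
        field_simp

lemma key_gamma (n : ℕ) (hn : 1 ≤ n) :
    Real.sqrt (n * π) * ((n : ℝ) / (2 * Real.exp 1)) ^ ((n : ℝ)/2) / 2
      < Real.Gamma ((n : ℝ)/2 + 1) := by
  rcases Nat.even_or_odd n with ⟨m, rfl⟩ | ⟨m, rfl⟩
  · -- even case: n = m + m = 2m
    have hm : 1 ≤ m := by omega
    have hM : (1:ℝ) ≤ m := by exact_mod_cast hm
    have hexp : ((m + m : ℕ) : ℝ) / 2 = (m : ℝ) := by push_cast; ring
    have hbase : ((m + m : ℕ) : ℝ) / (2 * Real.exp 1) = (m : ℝ) / Real.exp 1 := by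
      push_cast; field_simp; ring
    rw [hexp, hbase, Real.rpow_natCast]
    have hfac : Real.Gamma ((m:ℝ) + 1) = (Nat.factorial m : ℝ) := Real.Gamma_nat_eq_factorial m
    rw [hfac]
    have hs := stirling_lower m
    have h1 : Real.sqrt (((m+m : ℕ):ℝ) * π) = Real.sqrt π * Real.sqrt (2 * m) := by
      rw [← Real.sqrt_mul (by positivity)]
      congr 1
      push_cast; ring
    rw [h1]
    have hpos : 0 < Real.sqrt π * Real.sqrt (2 * (m:ℝ)) * ((m : ℝ) / Real.exp 1) ^ m := by
      have : (0:ℝ) < (m:ℝ) / Real.exp 1 := by positivity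
      positivity
    calc Real.sqrt π * Real.sqrt (2*(m:ℝ)) * ((m : ℝ) / Real.exp 1) ^ m / 2
        < Real.sqrt π * Real.sqrt (2*(m:ℝ)) * ((m : ℝ) / Real.exp 1) ^ m := by linarith
      _ ≤ (Nat.factorial m : ℝ) := by rw [mul_assoc]; exact hs
  · -- odd case: n = 2m+1
    rcases Nat.eq_zero_or_pos m with rfl | hm
    · -- n = 1
      simp only [Nat.mul_zero, Nat.zero_add, Nat.cast_one]
      have hG : Real.Gamma ((1:ℝ)/2 + 1) = Real.sqrt π / 2 := by
        rw [Real.Gamma_add_one (by norm_num), Real.Gamma_one_half_eq]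
        ring
      rw [hG, one_mul]
      have h2 : ((1:ℝ) / (2 * Real.exp 1)) ^ ((1:ℝ)/2) < 1 := by
        apply Real.rpow_lt_one (by positivity) _ (by norm_num)
        rw [div_lt_one (by positivity)]
        nlinarith [Real.exp_one_gt_d9]
      have hsp : 0 < Real.sqrt π := Real.sqrt_pos.mpr Real.pi_pos
      have h3 : (0:ℝ) < ((1:ℝ) / (2 * Real.exp 1)) ^ ((1:ℝ)/2) := by positivity
      calc Real.sqrt π * ((1:ℝ) / (2 * Real.exp 1)) ^ ((1:ℝ)/2) / 2
          < Real.sqrt π * 1 / 2 := by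
            gcongr
        _ = Real.sqrt π / 2 := by ring
    · -- m ≥ 1
      set M : ℝ := (m : ℝ) with hMdef
      have hM : (1:ℝ) ≤ M := by rw [hMdef]; exact_mod_cast hm
      have hexp : ((2*m + 1 : ℕ) : ℝ) / 2 = M + 1/2 := by push_cast; ring
      have hexp2 : ((2*m + 1 : ℕ) : ℝ) / 2 + 1 = M + 1/2 + 1 := by rw [hexp]
      rw [hexp2]
      have hb : (0:ℝ) < ((2*m+1 : ℕ):ℝ) / (2 * Real.exp 1) := by positivity
      set b : ℝ := ((2*m+1 : ℕ):ℝ) / (2 * Real.exp 1) with hbdef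
      have hbm : b ^ (M:ℝ) = b ^ m := by
        rw [hMdef, Real.rpow_natCast]
      have hsplit : b ^ (((2*m+1:ℕ):ℝ)/2) = b ^ m * b ^ ((1:ℝ)/2) := by
        rw [hexp, Real.rpow_add hb, hbm]
      rw [hsplit]
      have hb_eq : b = (M / Real.exp 1) * ((2*M+1)/(2*M)) := by
        rw [hbdef]; push_cast; field_simp; ring
      have h1e : (2*M+1)/(2*M) ≤ Real.exp (1/(2*M)) := by
        have := Real.add_one_le_exp (1/(2*M))
        have h2M : (0:ℝ) < 2*M := by linarith
        calc (2*M+1)/(2*M) = 1/(2*M) + 1 := by field_simp; ring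
          _ ≤ Real.exp (1/(2*M)) := this
      have hpow : ((2*M+1)/(2*M)) ^ m ≤ Real.exp (1/2) := by
        calc ((2*M+1)/(2*M)) ^ m ≤ Real.exp (1/(2*M)) ^ m := by
              apply pow_le_pow_left₀ (by positivity) h1e
          _ = Real.exp ((m : ℝ) * (1/(2*M))) := by rw [← Real.exp_nat_mul]
          _ = Real.exp (1/2) := by
              congr 1
              rw [← hMdef]
              field_simp
      have hbM_le : b ^ m ≤ (M / Real.exp 1) ^ m * Real.exp (1/2) := by
        rw [hb_eq, mul_pow]
        apply mul_le_mul_of_nonneg_left hpow (by positivity)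
      -- b ^ (1/2)
      have hb12 : b ^ ((1:ℝ)/2) = Real.sqrt ((2*M+1)/2) / Real.exp (1/2) := by
        rw [hbdef]
        push_cast
        rw [show (2*M+1) / (2 * Real.exp 1) = ((2*M+1)/2) / Real.exp 1 by ring,
          Real.div_rpow (by positivity) (Real.exp_pos 1).le, Real.exp_one_rpow,
          Real.sqrt_eq_rpow]
      -- assemble
      have hP : (0:ℝ) < (M / Real.exp 1) ^ m := by positivity
      have hcast : ((2*m+1 : ℕ):ℝ) = 2*M + 1 := by rw [hMdef]; push_cast; ring
      have step1 : Real.sqrt (((2*m+1:ℕ):ℝ) * π) * (b ^ m * b ^ ((1:ℝ)/2)) / 2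
          ≤ Real.sqrt ((2*M+1) * π) * (Real.sqrt ((2*M+1)/2) * (M / Real.exp 1) ^ m) / 2 := by
        rw [hcast, hb12]
        have hbm2 : b ^ m * (Real.sqrt ((2*M+1)/2) / Real.exp (1/2))
            ≤ Real.sqrt ((2*M+1)/2) * (M / Real.exp 1) ^ m := by
          calc b ^ m * (Real.sqrt ((2*M+1)/2) / Real.exp (1/2))
              ≤ ((M / Real.exp 1) ^ m * Real.exp (1/2)) * (Real.sqrt ((2*M+1)/2) / Real.exp (1/2)) := by
                apply mul_le_mul_of_nonneg_right hbM_le (by positivity)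
            _ = Real.sqrt ((2*M+1)/2) * (M / Real.exp 1) ^ m := by
                field_simp
        gcongr
      have step2 : Real.sqrt ((2*M+1) * π) * (Real.sqrt ((2*M+1)/2) * (M / Real.exp 1) ^ m) / 2
          < Real.sqrt π * (Real.sqrt (2*M) * (M / Real.exp 1) ^ m) * Real.sqrt (M + 1/2) := by
        have hnum : Real.sqrt ((2*M+1) * π) * Real.sqrt ((2*M+1)/2) / 2
            < Real.sqrt π * Real.sqrt (2*M) * Real.sqrt (M + 1/2) := by
          have h4 : Real.sqrt 4 = 2 := by
            rw [show (4:ℝ) = 2^2 by norm_num, Real.sqrt_sq (by norm_num)]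
          have lhs_eq : Real.sqrt ((2*M+1) * π) * Real.sqrt ((2*M+1)/2) / 2
              = Real.sqrt ((2*M+1) * π * ((2*M+1)/2) / 4) := by
            rw [← Real.sqrt_mul (by positivity), Real.sqrt_div (by positivity), h4]
          have rhs_eq : Real.sqrt π * Real.sqrt (2*M) * Real.sqrt (M + 1/2)
              = Real.sqrt (π * (2*M) * (M + 1/2)) := by
            rw [← Real.sqrt_mul Real.pi_pos.le, ← Real.sqrt_mul (by positivity)]
          rw [lhs_eq, rhs_eq]
          apply Real.sqrt_lt_sqrt (by positivity)
          nlinarith [mul_pos Real.pi_pos (show (0:ℝ) < 12*M^2 + 4*M - 1 by nlinarith)]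
        calc Real.sqrt ((2*M+1) * π) * (Real.sqrt ((2*M+1)/2) * (M / Real.exp 1) ^ m) / 2
            = (Real.sqrt ((2*M+1) * π) * Real.sqrt ((2*M+1)/2) / 2) * (M / Real.exp 1) ^ m := by
              ring
          _ < (Real.sqrt π * Real.sqrt (2*M) * Real.sqrt (M + 1/2)) * (M / Real.exp 1) ^ m := by
              exact mul_lt_mul_of_pos_right hnum hP
          _ = Real.sqrt π * (Real.sqrt (2*M) * (M / Real.exp 1) ^ m) * Real.sqrt (M + 1/2) := by
              ring
      have step3 : Real.sqrt π * (Real.sqrt (2*M) * (M / Real.exp 1) ^ m) * Real.sqrt (M + 1/2)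
          ≤ Real.Gamma (M + 1/2 + 1) := by
        calc Real.sqrt π * (Real.sqrt (2*M) * (M / Real.exp 1) ^ m) * Real.sqrt (M + 1/2)
            ≤ (Nat.factorial m : ℝ) * Real.sqrt (M + 1/2) := by
              apply mul_le_mul_of_nonneg_right _ (Real.sqrt_nonneg _)
              simpa [hMdef] using stirling_lower m
          _ ≤ Real.Gamma (M + 1/2 + 1) := by simpa [hMdef] using gamma_half_lower m
      calc Real.sqrt (((2*m+1:ℕ):ℝ) * π) * (b ^ m * b ^ ((1:ℝ)/2)) / 2
          ≤ Real.sqrt ((2*M+1) * π) * (Real.sqrt ((2*M+1)/2) * (M / Real.exp 1) ^ m) / 2 := step1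
        _ < Real.sqrt π * (Real.sqrt (2*M) * (M / Real.exp 1) ^ m) * Real.sqrt (M + 1/2) := step2
        _ ≤ Real.Gamma (M + 1/2 + 1) := step3

theorem stmt11 (n : ℕ) (hn : 1 ≤ n) :
    (volume (Metric.ball (0 : EuclideanSpace ℝ (Fin n)) 1)).toReal
      < (2 / Real.sqrt (n * π)) * (2 * π * Real.exp 1 / n) ^ ((n : ℝ) / 2) := by
  haveI : Nonempty (Fin n) := Fin.pos_iff_nonempty.mp (by omega)
  have hG : 0 < Real.Gamma ((n : ℝ)/2 + 1) := by
    apply Real.Gamma_pos_of_pos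
    positivity
  have hvol : (volume (Metric.ball (0 : EuclideanSpace ℝ (Fin n)) 1)).toReal
      = Real.sqrt π ^ n / Real.Gamma ((n : ℝ)/2 + 1) := by
    rw [EuclideanSpace.volume_ball, Fintype.card_fin]
    simp [ENNReal.toReal_ofReal (by positivity : (0:ℝ) ≤ Real.sqrt π ^ n / Real.Gamma ((n:ℝ)/2 + 1))]
  rw [hvol, div_lt_iff₀ hG]
  have hn0 : (0:ℝ) < n := by exact_mod_cast hn
  have hs : 0 < Real.sqrt ((n:ℝ) * π) := Real.sqrt_pos.mpr (by positivity)
  have hRpos : 0 < (2 / Real.sqrt ((n:ℝ) * π)) * (2 * π * Real.exp 1 / n) ^ ((n : ℝ) / 2) := by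
    positivity
  have hkey := key_gamma n hn
  calc Real.sqrt π ^ n
      = (2 / Real.sqrt ((n:ℝ) * π)) * (2 * π * Real.exp 1 / n) ^ ((n : ℝ) / 2)
        * (Real.sqrt ((n:ℝ) * π) * ((n : ℝ) / (2 * Real.exp 1)) ^ ((n : ℝ)/2) / 2) := by
        rw [show (2 / Real.sqrt ((n:ℝ) * π)) * (2 * π * Real.exp 1 / n) ^ ((n : ℝ) / 2)
            * (Real.sqrt ((n:ℝ) * π) * ((n : ℝ) / (2 * Real.exp 1)) ^ ((n : ℝ)/2) / 2)
            = (2 * π * Real.exp 1 / n) ^ ((n : ℝ) / 2) * ((n : ℝ) / (2 * Real.exp 1)) ^ ((n : ℝ)/2)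
              * (2 / Real.sqrt ((n:ℝ) * π) * (Real.sqrt ((n:ℝ) * π) / 2)) by ring,
          div_mul_div_comm, mul_comm (2:ℝ) (Real.sqrt ((n:ℝ)*π)),
          div_self (by positivity : Real.sqrt ((n:ℝ)*π) * 2 ≠ 0), mul_one,
          ← Real.mul_rpow (by positivity) (by positivity),
          show (2 * π * Real.exp 1 / n) * ((n : ℝ) / (2 * Real.exp 1)) = π by
            field_simp]
        rw [Real.sqrt_eq_rpow, ← Real.rpow_natCast (π ^ ((1:ℝ)/2)) n,
          ← Real.rpow_mul Real.pi_pos.le]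
        congr 1
        ring
    _ < (2 / Real.sqrt ((n:ℝ) * π)) * (2 * π * Real.exp 1 / n) ^ ((n : ℝ) / 2)
        * Real.Gamma ((n : ℝ)/2 + 1) := by
        exact mul_lt_mul_of_pos_left hkey hRpos
end
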